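/- arXiv:0802.1072 — 4 statements merged into one kernel-verified Lean document; each statement's English description precedes it below -/
import Mathlib

section
/- In the band presentation of B₃, for every index i (taken modulo 3) and every integer k ≥ 1, one has aᵢ⁻ᵏ = δ⁻ᵏ · a_{i+2−k} a_{i+3−k} ⋯ a_i a_{i+1}, where the right-hand factor is the product of k generators whose subscripts (modulo 3) increase by 1 at each step and end with a_i a_{i+1}. -/
/-!
Conjugation by `δ` lowers subscripts by one: reading `a_{j+2} a_{j+1} a_j` as `δ aⱼ` and as
`a_{j-1} δ` gives `δ aⱼ δ⁻¹ = a_{j-1}`. Induction on `k` then yields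
`δᵏ = a_{i+2-k} ⋯ a_i a_{i+1} · aᵢᵏ`, which is the formula after multiplying by `δ⁻ᵏ` on the left
and by `aᵢ⁻ᵏ` on the right.
-/

/-- The band relations `a₂a₁ = a₃a₂ = a₁a₃`, with subscripts taken modulo 3
(the generator `a₃` is indexed by `0 : ZMod 3`). -/
def bandRels : Set (FreeGroup (ZMod 3)) :=
  { FreeGroup.of 2 * FreeGroup.of 1 * (FreeGroup.of 0 * FreeGroup.of 2)⁻¹,
    FreeGroup.of 0 * FreeGroup.of 2 * (FreeGroup.of 1 * FreeGroup.of 0)⁻¹ }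

/-- The band-presented group `⟨a₁, a₂, a₃ | a₂a₁ = a₃a₂ = a₁a₃⟩` (a model of `B₃`). -/
abbrev BandB3 := PresentedGroup bandRels

/-- The band generators `a i`, indexed by `ZMod 3` (so `a 0 = a₃`). -/
def a (i : ZMod 3) : BandB3 := PresentedGroup.of i

/-- The fundamental element `δ = a₂a₁ (= a₃a₂ = a₁a₃)`. -/
def δ : BandB3 := a 2 * a 1

lemma a_two_mul_a_one : a 2 * a 1 = a 0 * a 2 :=
  PresentedGroup.mk_eq_mk_of_mul_inv_mem (Set.mem_insert _ _)

lemma a_zero_mul_a_two : a 0 * a 2 = a 1 * a 0 :=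
  PresentedGroup.mk_eq_mk_of_mul_inv_mem (Set.mem_insert_of_mem _ rfl)

lemma a_add_one_mul_a (j : ZMod 3) : a (j + 1) * a j = δ := by
  fin_cases j
  · exact (a_two_mul_a_one.trans a_zero_mul_a_two).symm
  · rfl
  · exact a_two_mul_a_one.symm

lemma delta_mul_a_mul_delta_inv (j : ZMod 3) : δ * a j * δ⁻¹ = a (j - 1) := by
  rw [mul_inv_eq_iff_eq_mul]
  calc δ * a j = a (j + 1 + 1) * a (j + 1) * a j := by rw [a_add_one_mul_a]
    _ = a (j - 1) * δ := by rw [mul_assoc, a_add_one_mul_a]; congr 2; grind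

def ascProd (m : ZMod 3) (k : ℕ) : BandB3 :=
  ((List.range k).map fun j => a (m + j)).prod

lemma ascProd_succ (m : ZMod 3) (k : ℕ) : ascProd m (k + 1) = ascProd m k * a (m + k) := by
  simp [ascProd, List.range_succ]

lemma delta_mul_ascProd_mul_delta_inv (m : ZMod 3) (k : ℕ) :
    δ * ascProd m k * δ⁻¹ = ascProd (m - 1) k := by
  rw [← MulAut.conj_apply, ascProd, map_list_prod, List.map_map, ascProd]
  congr 1
  refine List.map_congr_left fun j _ => ?_
  rw [Function.comp_apply, MulAut.conj_apply, delta_mul_a_mul_delta_inv]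
  congr 1
  ring

lemma delta_pow_eq_ascProd_mul_a_pow (i : ZMod 3) (k : ℕ) :
    δ ^ k = ascProd (i + 2 - k) k * a i ^ k := by
  induction k with
  | zero => simp [ascProd]
  | succ k ih =>
    calc δ ^ (k + 1) = δ * ascProd (i + 2 - k) k * δ⁻¹ * δ * a i ^ k := by
          rw [pow_succ', ih]; group
      _ = ascProd (i + 2 - (k + 1 : ℕ)) k * (a (i + 1) * a i) * a i ^ k := by
          rw [delta_mul_ascProd_mul_delta_inv, a_add_one_mul_a]; congr 3; push_cast; ring
      _ = ascProd (i + 2 - (k + 1 : ℕ)) (k + 1) * a i ^ (k + 1) := by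
          have last_index : i + 2 - (k + 1 : ℕ) + k = i + 1 := by push_cast; ring
          rw [ascProd_succ, last_index, pow_succ']
          simp only [mul_assoc]

theorem band_inverse_formula_general (i : ZMod 3) (k : ℕ) :
    (a i) ^ (-(k : ℤ)) =
      δ ^ (-(k : ℤ)) *
        ((List.range k).map (fun j => a (i + 2 - (k : ZMod 3) + (j : ZMod 3)))).prod := by
  change _ = _ * ascProd (i + 2 - k) k
  rw [zpow_neg, zpow_neg, zpow_natCast, zpow_natCast, delta_pow_eq_ascProd_mul_a_pow i k,
    mul_inv_rev, inv_mul_cancel_right]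

/-- For every index `i` (mod 3) and every `k ≥ 1`,
`aᵢ⁻ᵏ = δ⁻ᵏ · a_{i+2−k} a_{i+3−k} ⋯ a_i a_{i+1}`, where the right-hand factor is
the ordered product of `k` generators whose subscripts (mod 3) increase by 1 at each
step and end with `a_i a_{i+1}`. -/
theorem band_inverse_formula (i : ZMod 3) (k : ℕ) (hk : 1 ≤ k) :
    (a i) ^ (-(k : ℤ)) =
      δ ^ (-(k : ℤ)) *
        ((List.range k).map (fun j => a (i + 2 - (k : ZMod 3) + (j : ZMod 3)))).prod :=
  band_inverse_formula_general i k
end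

section
/- For every element β of B₃ (in its band presentation), among all representations β = δ^q · T with q an integer and T empty or a positive word in increasing form, there is exactly one for which q is maximal: the integer q, the number t of syllables of T, the initial subscript τ (when t > 0), and the exponent sequence (s₁, …, s_t) are all uniquely determined by β. This gives a normal form solving the word problem in B₃. -/
/-- The positive word in increasing form with initial subscript `τ` and exponent
sequence `s = (s₁, …, s_t)`, namely `a_τ^{s₁} a_{τ+1}^{s₂} ⋯ a_{τ+t−1}^{s_t}`. -/
def tailProd (τ : ZMod 3) (s : List ℕ) : BandB3 :=
  ((List.range s.length).map (fun i : ℕ => a (τ + (i : ZMod 3)) ^ s.getD i 0)).prod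

/-- A tail datum is either `none` (the empty word) or `some (τ, s)` recording the
initial subscript `τ` and the exponent sequence `s`.  Its value in `B₃`: -/
def tailVal : Option (ZMod 3 × List ℕ) → BandB3
  | none => 1
  | some (τ, s) => tailProd τ s

/-- A tail datum is admissible when it is the empty word, or a genuine increasing-form
positive word: `t = s.length ≥ 1` syllables, all exponents `≥ 1`. -/
def tailOK : Option (ZMod 3 × List ℕ) → Prop
  | none => True
  | some (_, s) => s ≠ [] ∧ ∀ x ∈ s, 1 ≤ x

/-!
Van der Waerden's trick. Left multiplication by a generator `a_j` is computed explicitly on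
pairs `(q, T)` standing for `δ^q T`: move `a_j` past `δ^q`, where it becomes `a_{j+q}`, and then
either raise the first exponent of `T`, or cancel `a_{τ+1} a_τ = δ` against the first letter
`a_τ` of `T`, or prepend a new syllable. Two consecutive steps `a_{j+1} a_j` act as `q ↦ q + 1`,
so the band relations hold and `B₃` acts on normal forms. Evaluation `(q, T) ↦ δ^q T` is
equivariant, and acting on the empty normal form by `δ^q T` gives back `(q, T)`; so evaluation is
a bijection. In particular the representation with `T` in increasing form is unique, and its `q`
is trivially the maximal one.
-/

namespace BandB3

theorem a_two_mul_a_one : a 2 * a 1 = a 0 * a 2 := by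
  have h := PresentedGroup.mk_eq_mk_of_mul_inv_mem (rels := bandRels) (Or.inl rfl)
  simp only [map_mul] at h
  exact h

theorem a_zero_mul_a_two : a 0 * a 2 = a 1 * a 0 := by
  have h := PresentedGroup.mk_eq_mk_of_mul_inv_mem (rels := bandRels) (Or.inr rfl)
  simp only [map_mul] at h
  exact h

theorem a_succ_mul_a (i : ZMod 3) : a (i + 1) * a i = δ := by
  fin_cases i
  · exact a_zero_mul_a_two.symm.trans a_two_mul_a_one.symm
  · rfl
  · exact a_two_mul_a_one.symm

theorem add_two_add_one (j : ZMod 3) : j + 2 + 1 = j := by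
  rw [add_assoc]; exact add_eq_left.mpr rfl

theorem a_mul_δ (j : ZMod 3) : a j * δ = δ * a (j + 1) := by
  calc a j * δ = a (j + 2 + 1) * (a (j + 1 + 1) * a (j + 1)) := by
        rw [add_two_add_one, a_succ_mul_a]
    _ = δ * a (j + 1) := by
        rw [← mul_assoc, add_assoc j 1 1, one_add_one_eq_two, a_succ_mul_a]

theorem a_mul_δ_inv (j : ZMod 3) : a j * δ⁻¹ = δ⁻¹ * a (j - 1) := by
  rw [mul_inv_eq_iff_eq_mul, mul_assoc, a_mul_δ, sub_add_cancel, inv_mul_cancel_left]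

theorem a_mul_δ_zpow (j : ZMod 3) (q : ℤ) : a j * δ ^ q = δ ^ q * a (j + q) := by
  induction q using Int.induction_on with
  | zero => simp
  | succ n ih =>
    rw [zpow_add_one, ← mul_assoc, ih, mul_assoc, a_mul_δ, ← mul_assoc, ← zpow_add_one]
    push_cast; ring_nf
  | pred n ih =>
    rw [zpow_sub_one, ← mul_assoc, ih, mul_assoc, a_mul_δ_inv, ← mul_assoc]
    push_cast; ring_nf

theorem tailProd_cons (τ : ZMod 3) (n : ℕ) (t : List ℕ) :
    tailProd τ (n :: t) = a τ ^ n * tailProd (τ + 1) t := by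
  simp only [tailProd, List.length_cons, List.range_succ_eq_map, List.map_cons, List.prod_cons,
    List.map_map, Nat.cast_zero, add_zero, List.getD_cons_zero, Function.comp_def,
    List.getD_cons_succ, Nat.cast_succ, add_assoc, add_comm (1 : ZMod 3)]

/-- The tail datum of `a_τ^{s₁} a_{τ+1}^{s₂} ⋯`, where the empty word is `none`. -/
def ofList (τ : ZMod 3) : List ℕ → Option (ZMod 3 × List ℕ)
  | [] => none
  | n :: t => some (τ, n :: t)

/-- The tail datum of `a_τ^k a_{τ+1}^{t₁} a_{τ+2}^{t₂} ⋯`; here `k = 0` is allowed. -/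
def consTail (τ : ZMod 3) (k : ℕ) (t : List ℕ) : Option (ZMod 3 × List ℕ) :=
  if k = 0 then ofList (τ + 1) t else some (τ, k :: t)

/-- `mulTail m T = (e, T')` with `a_m T = δ^e T'` for admissible `T`. -/
def mulTail (m : ZMod 3) : Option (ZMod 3 × List ℕ) → ℤ × Option (ZMod 3 × List ℕ)
  | some (τ, n :: t) =>
    if m = τ then (0, some (τ, (n + 1) :: t))
    else if m = τ + 1 then (1, consTail τ (n - 1) t)
    else (0, some (m, 1 :: n :: t))
  | _ => (0, some (m, [1]))

@[simp] theorem ofList_nil (τ : ZMod 3) : ofList τ [] = none := rfl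

@[simp] theorem ofList_cons (τ : ZMod 3) (n : ℕ) (t : List ℕ) :
    ofList τ (n :: t) = some (τ, n :: t) := rfl

@[simp] theorem consTail_zero (τ : ZMod 3) (t : List ℕ) : consTail τ 0 t = ofList (τ + 1) t := rfl

@[simp] theorem consTail_succ (τ : ZMod 3) (k : ℕ) (t : List ℕ) :
    consTail τ (k + 1) t = some (τ, (k + 1) :: t) := rfl

theorem tailVal_ofList (τ : ZMod 3) (s : List ℕ) : tailVal (ofList τ s) = tailProd τ s := by
  cases s <;> rfl

theorem tailVal_consTail (τ : ZMod 3) (k : ℕ) (t : List ℕ) :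
    tailVal (consTail τ k t) = a τ ^ k * tailProd (τ + 1) t := by
  unfold consTail
  split_ifs with hk
  · rw [tailVal_ofList, hk, pow_zero, one_mul]
  · exact tailProd_cons τ k t

theorem tailOK_ofList (τ : ZMod 3) {s : List ℕ} (hs : ∀ x ∈ s, 1 ≤ x) : tailOK (ofList τ s) := by
  cases s
  · trivial
  · exact ⟨List.cons_ne_nil _ _, hs⟩

theorem tailOK_consTail (τ : ZMod 3) (k : ℕ) {t : List ℕ} (ht : ∀ x ∈ t, 1 ≤ x) :
    tailOK (consTail τ k t) := by
  unfold consTail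
  split_ifs with hk
  · exact tailOK_ofList _ ht
  · exact ⟨List.cons_ne_nil _ _, List.forall_mem_cons.mpr ⟨Nat.one_le_iff_ne_zero.mpr hk, ht⟩⟩

theorem eq_or_eq_add_one_or_eq_add_two (m τ : ZMod 3) : m = τ ∨ m = τ + 1 ∨ m = τ + 2 := by
  revert m τ; decide

theorem mulTail_none (m : ZMod 3) : mulTail m none = (0, some (m, [1])) := rfl

theorem mulTail_self (τ : ZMod 3) (n : ℕ) (t : List ℕ) :
    mulTail τ (some (τ, n :: t)) = (0, some (τ, (n + 1) :: t)) :=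
  if_pos rfl

theorem mulTail_add_one (τ : ZMod 3) (n : ℕ) (t : List ℕ) :
    mulTail (τ + 1) (some (τ, n :: t)) = (1, consTail τ (n - 1) t) := by
  simp [mulTail]

theorem mulTail_add_two (τ : ZMod 3) (n : ℕ) (t : List ℕ) :
    mulTail (τ + 2) (some (τ, n :: t)) = (0, some (τ + 2, 1 :: n :: t)) := by
  have h₀ : (2 : ZMod 3) ≠ 0 := by decide
  have h₁ : (2 : ZMod 3) ≠ 1 := by decide
  simp [mulTail, h₀, h₁]

theorem tailOK_mulTail (m : ZMod 3) {T : Option (ZMod 3 × List ℕ)} (hT : tailOK T) :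
    tailOK (mulTail m T).2 := by
  rcases T with _ | ⟨τ, _ | ⟨n, t⟩⟩
  · exact ⟨List.cons_ne_nil _ _, by simp⟩
  · exact absurd rfl hT.1
  · have ht : ∀ x ∈ t, 1 ≤ x := fun x hx => hT.2 x (List.mem_cons_of_mem _ hx)
    rcases eq_or_eq_add_one_or_eq_add_two m τ with rfl | rfl | rfl
    · rw [mulTail_self]
      exact ⟨List.cons_ne_nil _ _, by simpa using ht⟩
    · rw [mulTail_add_one]
      exact tailOK_consTail τ _ ht
    · rw [mulTail_add_two]
      exact ⟨List.cons_ne_nil _ _, by simpa using hT.2⟩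

theorem δ_zpow_mul_tailVal_mulTail (m : ZMod 3) {T : Option (ZMod 3 × List ℕ)} (hT : tailOK T) :
    δ ^ (mulTail m T).1 * tailVal (mulTail m T).2 = a m * tailVal T := by
  rcases T with _ | ⟨τ, _ | ⟨n, t⟩⟩
  · simp [mulTail_none, tailVal, tailProd]
  · exact absurd rfl hT.1
  · obtain ⟨k, rfl⟩ : ∃ k, n = k + 1 := ⟨n - 1, by have := hT.2 n (by simp); omega⟩
    rcases eq_or_eq_add_one_or_eq_add_two m τ with rfl | rfl | rfl
    · rw [mulTail_self]
      simp only [tailVal, tailProd_cons, zpow_zero, one_mul, pow_succ', mul_assoc]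
    · rw [mulTail_add_one, Nat.add_sub_cancel, zpow_one, tailVal_consTail, tailVal,
        tailProd_cons, ← a_succ_mul_a τ, pow_succ']
      group
    · rw [mulTail_add_two]
      simp only [tailVal, tailProd_cons, zpow_zero, one_mul, pow_one, add_two_add_one]

theorem mulTail_self_consTail (τ : ZMod 3) (k : ℕ) (t : List ℕ) :
    mulTail τ (consTail τ k t) = (0, consTail τ (k + 1) t) := by
  rcases k with _ | k
  · rcases t with _ | ⟨u, t⟩
    · rfl
    · have h := mulTail_add_two (τ + 1) u t
      rw [show τ + 1 + 2 = τ by ring_nf; reduce_mod_char] at h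
      exact h
  · exact mulTail_self τ (k + 1) t

/-- The `δ^e` produced by the first step shifts the subscript of the second generator by `e` when
moved to the left. -/
theorem mulTail_succ_mulTail (m : ZMod 3) {T : Option (ZMod 3 × List ℕ)} (hT : tailOK T) :
    mulTail (m + 1 + (mulTail m T).1) (mulTail m T).2 = (1 - (mulTail m T).1, T) := by
  rcases T with _ | ⟨τ, _ | ⟨n, t⟩⟩
  · simpa [mulTail_none] using mulTail_add_one m 1 []
  · exact absurd rfl hT.1
  · obtain ⟨k, rfl⟩ : ∃ k, n = k + 1 := ⟨n - 1, by have := hT.2 n (by simp); omega⟩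
    rcases eq_or_eq_add_one_or_eq_add_two m τ with h | rfl | rfl
    · subst m
      simpa [mulTail_self] using mulTail_add_one τ (k + 2) t
    · rw [mulTail_add_one, Nat.add_sub_cancel]
      simpa [show τ + 1 + 1 + 1 = τ by ring_nf; reduce_mod_char] using
        mulTail_self_consTail τ k t
    · simpa [mulTail_add_two, add_two_add_one] using mulTail_add_one (τ + 2) 1 ((k + 1) :: t)

abbrev NF := {x : ℤ × Option (ZMod 3 × List ℕ) // tailOK x.2}

namespace NF

def value (x : NF) : BandB3 := δ ^ x.1.1 * tailVal x.1.2

def base : NF := ⟨(0, none), trivial⟩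

theorem value_base : base.value = 1 := by simp [value, base, tailVal]

def mulGen (j : ZMod 3) (x : NF) : NF :=
  ⟨(x.1.1 + (mulTail (j + x.1.1) x.1.2).1, (mulTail (j + x.1.1) x.1.2).2),
    tailOK_mulTail _ x.2⟩

def shift : Equiv.Perm NF where
  toFun x := ⟨(x.1.1 + 1, x.1.2), x.2⟩
  invFun x := ⟨(x.1.1 - 1, x.1.2), x.2⟩
  left_inv x := by simp
  right_inv x := by simp

theorem shift_zpow_apply (q : ℤ) (x : NF) : (shift ^ q) x = ⟨(x.1.1 + q, x.1.2), x.2⟩ := by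
  induction q using Int.induction_on generalizing x with
  | zero => simp
  | succ n ih => rw [zpow_add_one, Equiv.Perm.mul_apply, ih]; simp [shift]; ring
  | pred n ih => rw [zpow_sub_one, Equiv.Perm.mul_apply, ih]; simp [shift]; ring

theorem value_mulGen (j : ZMod 3) (x : NF) : (mulGen j x).value = a j * x.value := by
  rw [value, value, mulGen, zpow_add, mul_assoc, δ_zpow_mul_tailVal_mulTail _ x.2, ← mul_assoc, ← a_mul_δ_zpow,
    mul_assoc]

theorem mulGen_succ_mulGen (j : ZMod 3) (x : NF) : mulGen (j + 1) (mulGen j x) = shift x := by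
  obtain ⟨⟨q, T⟩, hT⟩ := x
  have h := mulTail_succ_mulTail (j + q) hT
  apply Subtype.ext
  simp only [mulGen, shift, Equiv.coe_fn_mk]
  rw [Int.cast_add, ← add_assoc, add_right_comm j 1, h]
  ext <;> simp

theorem bijective_mulGen (j : ZMod 3) : Function.Bijective (mulGen j) := by
  have hsucc : mulGen (j + 1) ∘ mulGen j = shift := funext (mulGen_succ_mulGen j)
  have hpred : mulGen j ∘ mulGen (j - 1) = shift := funext fun x => by
    simpa only [Function.comp_apply, sub_add_cancel] using mulGen_succ_mulGen (j - 1) x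
  exact ⟨.of_comp (hsucc ▸ shift.injective), .of_comp (hpred ▸ shift.surjective)⟩

theorem coe_iterate_mulGen_consTail (τ : ZMod 3) (t : List ℕ) (x : NF)
    (hx : x.1 = (0, consTail τ 0 t)) (n : ℕ) : ((mulGen τ)^[n] x).1 = (0, consTail τ n t) := by
  induction n with
  | zero => exact hx
  | succ n ih =>
    rw [Function.iterate_succ_apply', mulGen]
    simp [ih, mulTail_self_consTail]

end NF

open NF

noncomputable def genPerm (j : ZMod 3) : Equiv.Perm NF := Equiv.ofBijective _ (bijective_mulGen j)

theorem genPerm_mul_genPerm (i : ZMod 3) : genPerm (i + 1) * genPerm i = shift :=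
  Equiv.ext (mulGen_succ_mulGen i)

noncomputable def action : BandB3 →* Equiv.Perm NF :=
  PresentedGroup.toGroup (f := genPerm) <| by
    have h₂₁ : genPerm 2 * genPerm 1 = shift := genPerm_mul_genPerm 1
    have h₀₂ : genPerm 0 * genPerm 2 = shift := genPerm_mul_genPerm 2
    have h₁₀ : genPerm 1 * genPerm 0 = shift := genPerm_mul_genPerm 0
    rintro r (rfl | rfl) <;>
      simp only [map_mul, map_inv, FreeGroup.lift_apply_of, mul_inv_eq_one, h₂₁, h₀₂, h₁₀]

theorem action_a (j : ZMod 3) : action (a j) = genPerm j := PresentedGroup.toGroup.of _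

theorem action_δ : action δ = shift := by
  rw [δ, map_mul, action_a, action_a]
  exact genPerm_mul_genPerm 1

theorem value_action (β : BandB3) : ∀ x : NF, (action β x).value = β * x.value := by
  induction β using PresentedGroup.induction_on with | H z => ?_
  induction z using FreeGroup.induction_on with
  | C1 => simp
  | of j => exact value_mulGen j
  | inv_of j ih =>
    intro x
    rw [map_inv, map_inv, eq_inv_mul_iff_mul_eq, ← ih, Equiv.Perm.coe_inv, Equiv.apply_symm_apply]
  | mul y z ihy ihz =>
    intro x
    rw [map_mul, map_mul, Equiv.Perm.mul_apply, ihy, ihz, mul_assoc]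

theorem action_a_pow_apply (j : ZMod 3) (n : ℕ) (x : NF) :
    action (a j ^ n) x = (mulGen j)^[n] x := by
  rw [map_pow, action_a, Equiv.Perm.coe_pow]
  rfl

theorem coe_action_tailProd_base (τ : ZMod 3) {s : List ℕ} (hs : ∀ x ∈ s, 1 ≤ x) :
    (action (tailProd τ s) base).1 = (0, ofList τ s) := by
  induction s generalizing τ with
  | nil => rfl
  | cons n t ih =>
    obtain ⟨k, rfl⟩ : ∃ k, n = k + 1 := ⟨n - 1, by have := hs n (by simp); omega⟩
    rw [tailProd_cons, map_mul, Equiv.Perm.mul_apply, action_a_pow_apply,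
      coe_iterate_mulGen_consTail τ t _ (ih (τ + 1) fun x hx => hs x (by simp [hx])), consTail_succ]
    rfl

theorem action_value_base (x : NF) : action x.value base = x := by
  obtain ⟨⟨q, T⟩, hT⟩ := x
  have htail : action (tailVal T) base = ⟨(0, T), hT⟩ := by
    rcases T with _ | ⟨τ, s⟩
    · rfl
    · exact Subtype.ext ((coe_action_tailProd_base τ hT.2).trans (by
        obtain ⟨n, t, rfl⟩ := List.exists_cons_of_ne_nil hT.1; rfl))
  rw [value, map_mul, Equiv.Perm.mul_apply, htail, map_zpow, action_δ, shift_zpow_apply]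
  simp

noncomputable def normalFormEquiv : BandB3 ≃ NF where
  toFun β := action β base
  invFun := NF.value
  left_inv β := by rw [value_action, value_base, mul_one]
  right_inv := action_value_base

theorem eq_value_iff (β : BandB3) {nf : ℤ × Option (ZMod 3 × List ℕ)} (hnf : tailOK nf.2) :
    β = δ ^ nf.1 * tailVal nf.2 ↔ (normalFormEquiv β).1 = nf :=
  (normalFormEquiv.eq_symm_apply (x := ⟨nf, hnf⟩)).trans Subtype.ext_iff

end BandB3

/-- Among all representations `β = δ^q · T` with `T` empty or a positive word in
increasing form, there is exactly one with `q` maximal: the power `q`, and the tail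
datum (the number `t` of syllables, the initial subscript `τ` when `t > 0`, and the
exponent sequence `(s₁, …, s_t)`) are all uniquely determined by `β`.  This normal
form solves the word problem in `B₃`. -/
theorem normal_form_exists_unique (β : BandB3) :
    ∃! nf : ℤ × Option (ZMod 3 × List ℕ),
      tailOK nf.2 ∧ β = δ ^ nf.1 * tailVal nf.2 ∧
        ∀ (q : ℤ) (T : Option (ZMod 3 × List ℕ)),
          tailOK T → β = δ ^ q * tailVal T → q ≤ nf.1 := by
  set x := BandB3.normalFormEquiv β
  refine ⟨x.1, ⟨x.2, (BandB3.eq_value_iff β x.2).2 rfl, fun q T hT hβ => ?_⟩, ?_⟩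
  · exact (congrArg Prod.fst ((BandB3.eq_value_iff β (nf := (q, T)) hT).1 hβ)).ge
  · rintro nf ⟨hnf, hβ, -⟩
    exact ((BandB3.eq_value_iff β hnf).1 hβ).symm
end

section
/- For every element β of B₃ (in its band presentation) there is a maximal integer m — the summit power of β — such that some conjugate of β can be written as δ^m times a (possibly empty) positive word; moreover the summit set of β, namely the set of all conjugates of β that can be written as δ^m times a positive word with this maximal m, is nonempty and finite. -/
/-- The set of conjugates of `β` that can be written as `δ^q` times a (possibly empty)
positive word, i.e. a product of band generators with no inverses (recorded as the
list of its subscripts). -/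
def powerSet (β : BandB3) (q : ℤ) : Set BandB3 :=
  {γ | IsConj β γ ∧ ∃ L : List (ZMod 3), γ = δ ^ q * (L.map a).prod}

namespace SummitAux

lemma mk_rel_one {r : FreeGroup (ZMod 3)} (hr : r ∈ bandRels) :
    PresentedGroup.mk bandRels r = 1 :=
  (QuotientGroup.eq_one_iff _).2 (Subgroup.subset_normalClosure hr)

lemma rel1 : a 2 * a 1 = a 0 * a 2 := by
  have h := mk_rel_one (r := FreeGroup.of 2 * FreeGroup.of 1 *
      (FreeGroup.of 0 * FreeGroup.of 2)⁻¹) (Or.inl rfl)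
  simp only [map_mul, map_inv] at h
  have := mul_inv_eq_one.mp h
  simpa [a, PresentedGroup.of] using this

lemma rel2 : a 0 * a 2 = a 1 * a 0 := by
  have h := mk_rel_one (r := FreeGroup.of 0 * FreeGroup.of 2 *
      (FreeGroup.of 1 * FreeGroup.of 0)⁻¹) (Or.inr rfl)
  simp only [map_mul, map_inv] at h
  have := mul_inv_eq_one.mp h
  simpa [a, PresentedGroup.of] using this

lemma delta_eq (i : ZMod 3) : a (i + 1) * a i = δ := by
  fin_cases i
  · show a (0 + 1) * a 0 = δ
    have : (0 + 1 : ZMod 3) = 1 := by decide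
    rw [this, δ, rel1, rel2]
  · show a (1 + 1) * a 1 = δ
    have : (1 + 1 : ZMod 3) = 2 := by decide
    rw [this, δ]
  · show a (2 + 1) * a 2 = δ
    have : (2 + 1 : ZMod 3) = 0 := by decide
    rw [this, δ, rel1]

lemma add_two_add_one (i : ZMod 3) : i + 2 + 1 = i := by
  have : (2 + 1 : ZMod 3) = 0 := by decide
  rw [add_assoc, this, add_zero]

lemma add_one_add_one (i : ZMod 3) : i + 1 + 1 = i + 2 := by
  rw [add_assoc]; rfl

lemma a_mul_delta (i : ZMod 3) : a i * δ = δ * a (i + 1) := by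
  have h1 := delta_eq (i + 2)
  rw [add_two_add_one] at h1
  have h2 := delta_eq (i + 1)
  rw [add_one_add_one] at h2
  calc a i * δ = a i * (a (i + 2) * a (i + 1)) := by rw [h2]
    _ = (a i * a (i + 2)) * a (i + 1) := (mul_assoc _ _ _).symm
    _ = δ * a (i + 1) := by rw [h1]

lemma a_mul_delta_inv (i : ZMod 3) : a i * δ⁻¹ = δ⁻¹ * a (i + 2) := by
  have h := a_mul_delta (i + 2)
  rw [add_two_add_one] at h
  apply mul_right_cancel (b := δ)
  simp [mul_assoc, h]

lemma inv_a (i : ZMod 3) : (a i)⁻¹ = δ⁻¹ * a (i + 1) := by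
  have h := delta_eq i
  rw [← h]
  simp [mul_inv_rev, mul_assoc]

lemma prod_shift (L : List (ZMod 3)) :
    (L.map a).prod * δ⁻¹ = δ⁻¹ * ((L.map (· + 2)).map a).prod := by
  induction L with
  | nil => simp
  | cons i L ih =>
      simp only [List.map_cons, List.prod_cons, mul_assoc, ih]
      rw [← mul_assoc, a_mul_delta_inv, mul_assoc]

lemma of_eq_a (i : ZMod 3) : (PresentedGroup.of i : BandB3) = a i := rfl

lemma exists_rep (β : BandB3) :
    ∃ q : ℤ, ∃ L : List (ZMod 3), β = δ ^ q * (L.map a).prod := by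
  have hmem : β ∈ Subgroup.closure (Set.range (PresentedGroup.of :
      ZMod 3 → BandB3)) := by
    rw [PresentedGroup.closure_range_of]; trivial
  refine Subgroup.closure_induction_right
    (p := fun x _ => ∃ q : ℤ, ∃ L : List (ZMod 3), x = δ ^ q * (L.map a).prod)
    ⟨0, [], by simp⟩ ?_ ?_ hmem
  · rintro x _ y ⟨i, rfl⟩ ⟨q, L, rfl⟩
    exact ⟨q, L ++ [i], by simp [mul_assoc, of_eq_a]⟩
  · rintro x _ y ⟨i, rfl⟩ ⟨q, L, rfl⟩
    refine ⟨q - 1, L.map (· + 2) ++ [i + 1], ?_⟩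
    rw [List.map_append, List.prod_append, List.map_singleton, List.prod_singleton,
      of_eq_a, inv_a]
    calc δ ^ q * (L.map a).prod * (δ⁻¹ * a (i + 1))
        = δ ^ q * ((L.map a).prod * δ⁻¹) * a (i + 1) := by group
      _ = δ ^ q * (δ⁻¹ * ((L.map (· + 2)).map a).prod) * a (i + 1) := by
          rw [prod_shift]
      _ = δ ^ (q - 1) * (((L.map (· + 2)).map a).prod * a (i + 1)) := by group

/-- Abelianization map sending each generator to `1 ∈ ℤ`. -/
def ab : BandB3 →* Multiplicative ℤ :=
  PresentedGroup.toGroup (f := fun _ : ZMod 3 => Multiplicative.ofAdd (1 : ℤ))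
    (by
      rintro r (rfl | rfl) <;>
        · simp only [map_mul, map_inv, FreeGroup.lift_apply_of]
          group)

lemma ab_a (i : ZMod 3) : ab (a i) = Multiplicative.ofAdd (1 : ℤ) :=
  PresentedGroup.toGroup.of _

lemma ab_delta : ab δ = Multiplicative.ofAdd (2 : ℤ) := by
  rw [δ, map_mul, ab_a, ab_a, ← ofAdd_add]
  norm_num

lemma ab_prod (L : List (ZMod 3)) :
    ab ((L.map a).prod) = Multiplicative.ofAdd (L.length : ℤ) := by
  induction L with
  | nil => simp
  | cons i L ih =>
      rw [List.map_cons, List.prod_cons, map_mul, ab_a, ih, ← ofAdd_add]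
      congr 1
      simp [add_comm]

/-- The additive abelianization. -/
def E (x : BandB3) : ℤ := Multiplicative.toAdd (ab x)

lemma E_eq (q : ℤ) (L : List (ZMod 3)) :
    E (δ ^ q * (L.map a).prod) = 2 * q + L.length := by
  unfold E
  rw [map_mul, map_zpow, ab_delta, ab_prod, toAdd_mul, toAdd_zpow, toAdd_ofAdd,
    toAdd_ofAdd, smul_eq_mul]
  ring

lemma E_conj {x y : BandB3} (h : IsConj x y) : E x = E y := by
  obtain ⟨z, hz⟩ := isConj_iff.mp h
  have hxy : ab y = ab x := by
    rw [← hz, map_mul, map_mul, map_inv, mul_comm (ab z) (ab x),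
      mul_inv_cancel_right]
  unfold E
  rw [hxy]

end SummitAux

open SummitAux in
/-- For every `β ∈ B₃` there is a maximal integer `m` — the summit power — such that
some conjugate of `β` is `δ^m` times a positive word; and the summit set of `β`, the
set of all such conjugates for this maximal `m`, is nonempty and finite. -/
theorem summit_set_nonempty_finite (β : BandB3) :
    ∃ m : ℤ,
      (powerSet β m).Nonempty ∧
      (∀ q : ℤ, (powerSet β q).Nonempty → q ≤ m) ∧
      (powerSet β m).Finite := by
  -- the set of possible powers is nonempty and bounded above
  have hinh : ∃ q : ℤ, (powerSet β q).Nonempty := by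
    obtain ⟨q, L, hL⟩ := exists_rep β
    exact ⟨q, β, IsConj.refl β, L, hL⟩
  have hbd : ∀ q : ℤ, (powerSet β q).Nonempty → q ≤ |E β| := by
    rintro q ⟨γ, hconj, L, rfl⟩
    have h1 : E β = 2 * q + L.length := by rw [E_conj hconj, E_eq]
    have h2 : E β ≤ |E β| := le_abs_self _
    have h3 : (0 : ℤ) ≤ |E β| := abs_nonneg _
    omega
  obtain ⟨m, hm, hmax⟩ := Int.exists_greatest_of_bdd ⟨|E β|, hbd⟩ hinh
  refine ⟨m, hm, hmax, ?_⟩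
  -- finiteness: all positive parts have the same length
  have hsub : powerSet β m ⊆
      (fun L : List (ZMod 3) => δ ^ m * (L.map a).prod) ''
        {L : List (ZMod 3) | L.length = (E β - 2 * m).toNat} := by
    rintro γ ⟨hconj, L, rfl⟩
    refine ⟨L, ?_, rfl⟩
    have h1 : E β = 2 * m + L.length := by rw [E_conj hconj, E_eq]
    have : (L.length : ℤ) = E β - 2 * m := by omega
    simp only [Set.mem_setOf_eq]
    omega
  exact Set.Finite.subset ((List.finite_length_eq _ _).image _) hsub
end

section
/- In B₃, the three braids σ₁⁻⁵ σ₂³ σ₁⁻³ σ₂⁻¹, σ₁² σ₂⁻² σ₁⁻⁵ σ₂⁻¹, and σ₁⁻³ σ₂⁻⁴ σ₁² σ₂⁻¹ are pairwise conjugate (exhibiting conjugate flype-admissible 3-braids whose braid crossing numbers |u|+|v|+|w|+1 differ: the first has 12 crossings while the other two have 10). -/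
/-- The single braid relation `σ₁σ₂σ₁ = σ₂σ₁σ₂` for the classical presentation of `B₃`. -/
def braidRels : Set (FreeGroup (Fin 2)) :=
  { FreeGroup.of 0 * FreeGroup.of 1 * FreeGroup.of 0 *
      (FreeGroup.of 1 * FreeGroup.of 0 * FreeGroup.of 1)⁻¹ }

/-- The braid group `B₃ = ⟨σ₁, σ₂ | σ₁σ₂σ₁ = σ₂σ₁σ₂⟩`. -/
abbrev B3 := PresentedGroup braidRels

/-- The classical generators `σ₁ = σ 0`, `σ₂ = σ 1` of `B₃`. -/
def σ (i : Fin 2) : B3 := PresentedGroup.of i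

/-!
The braid relation `aba = bab` gives `a b a⁻¹ = b⁻¹ a b`, hence, conjugation being a
homomorphism, the rule `a bⁿ a⁻¹ = b⁻¹ aⁿ b` for every `n : ℤ`, and its mirror image with `a` and
`b` swapped. Three applications of the rule show that `a² b⁻² a` conjugates the first braid to the
second, and two that `b a⁻¹` conjugates the second braid to the third.
-/

section BraidRelation

variable {G : Type*} [Group G] {a b : G}

theorem conj_zpow_eq_of_braid (h : a * b * a = b * a * b) (n : ℤ) :
    a * b ^ n * a⁻¹ = b⁻¹ * a ^ n * b := by
  have hconj : a * b * a⁻¹ = b⁻¹ * a * b := by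
    rw [mul_inv_eq_iff_eq_mul, mul_assoc, mul_assoc, eq_inv_mul_iff_mul_eq, ← mul_assoc,
      ← mul_assoc, h]
  calc a * b ^ n * a⁻¹ = (a * b * a⁻¹) ^ n := conj_zpow.symm
    _ = (b⁻¹ * a * b) ^ n := by rw [hconj]
    _ = b⁻¹ * a ^ n * b := by simpa only [inv_inv] using conj_zpow (a := b⁻¹)

theorem isConj_braid_twelve_ten (h : a * b * a = b * a * b) :
    IsConj (a ^ (-5 : ℤ) * b ^ (3 : ℤ) * a ^ (-3 : ℤ) * b⁻¹)
      (a ^ (2 : ℤ) * b ^ (-2 : ℤ) * a ^ (-5 : ℤ) * b⁻¹) := by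
  refine isConj_iff.2 ⟨a ^ (2 : ℤ) * b ^ (-2 : ℤ) * a, ?_⟩
  calc
    _ = a ^ (2 : ℤ) * b ^ (-2 : ℤ) * a ^ (-4 : ℤ) * b ^ (3 : ℤ) * a ^ (-3 : ℤ) *
          (b⁻¹ * a ^ (-1 : ℤ) * b) * b * a ^ (-2 : ℤ) := by
      group
      -- `group` does not merge `x * b * b` into `x * b ^ 2`
      simp only [zpow_two, mul_assoc]
    _ = a ^ (2 : ℤ) * b ^ (-2 : ℤ) * a ^ (-4 : ℤ) * b ^ (3 : ℤ) * a ^ (-2 : ℤ) *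
          (b⁻¹ * a ^ (-1 : ℤ) * b) * a ^ (-2 : ℤ) := by
      conv_lhs => rw [← conj_zpow_eq_of_braid h]
      group
    _ = a ^ (2 : ℤ) * b ^ (-2 : ℤ) * a ^ (-5 : ℤ) * (a * b ^ (3 : ℤ) * a⁻¹) * b⁻¹ *
          a ^ (-3 : ℤ) := by
      rw [← conj_zpow_eq_of_braid h]
      group
    _ = a ^ (2 : ℤ) * b ^ (-2 : ℤ) * a ^ (-5 : ℤ) * b⁻¹ := by
      rw [conj_zpow_eq_of_braid h]
      group

theorem isConj_braid_ten_ten (h : a * b * a = b * a * b) :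
    IsConj (a ^ (2 : ℤ) * b ^ (-2 : ℤ) * a ^ (-5 : ℤ) * b⁻¹)
      (a ^ (-3 : ℤ) * b ^ (-4 : ℤ) * a ^ (2 : ℤ) * b⁻¹) := by
  refine isConj_iff.2 ⟨b * a⁻¹, ?_⟩
  calc
    _ = b * (a * b ^ (-2 : ℤ) * a⁻¹) * a ^ (-4 : ℤ) * b⁻¹ * a * b⁻¹ := by group
    _ = a ^ (-2 : ℤ) * (b * a ^ (-4 : ℤ) * b⁻¹) * a * b⁻¹ := by
      rw [conj_zpow_eq_of_braid h]
      group
    _ = a ^ (-3 : ℤ) * b ^ (-4 : ℤ) * a ^ (2 : ℤ) * b⁻¹ := by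
      rw [conj_zpow_eq_of_braid h.symm]
      group
      simp only [zpow_two, mul_assoc]

end BraidRelation

theorem σ_braid : σ 0 * σ 1 * σ 0 = σ 1 * σ 0 * σ 1 :=
  PresentedGroup.mk_eq_mk_of_mul_inv_mem rfl

/-- The three braids `σ₁⁻⁵σ₂³σ₁⁻³σ₂⁻¹`, `σ₁²σ₂⁻²σ₁⁻⁵σ₂⁻¹` and `σ₁⁻³σ₂⁻⁴σ₁²σ₂⁻¹`
are pairwise conjugate in `B₃` (conjugate flype-admissible braids with braid
crossing numbers 12, 10, 10 respectively). -/
theorem flype_conjugates_different_crossing_numbers :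
    IsConj (σ 0 ^ (-5 : ℤ) * σ 1 ^ (3 : ℤ) * σ 0 ^ (-3 : ℤ) * (σ 1)⁻¹)
        (σ 0 ^ (2 : ℤ) * σ 1 ^ (-2 : ℤ) * σ 0 ^ (-5 : ℤ) * (σ 1)⁻¹) ∧
    IsConj (σ 0 ^ (2 : ℤ) * σ 1 ^ (-2 : ℤ) * σ 0 ^ (-5 : ℤ) * (σ 1)⁻¹)
        (σ 0 ^ (-3 : ℤ) * σ 1 ^ (-4 : ℤ) * σ 0 ^ (2 : ℤ) * (σ 1)⁻¹) :=
  ⟨isConj_braid_twelve_ten σ_braid, isConj_braid_ten_ten σ_braid⟩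
end
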